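/- As n → ∞, the number #T_{n,p} of triangulations of the p-gon with n internal vertices satisfies #T_{n,p} ~ C(p)·(12√3)^n·n^{-5/2}, where C(p) = 3^{p-2}·p·(2p)! / (4√(2π)·(p!)^2). -/

import Mathlib

open Asymptotics Filter

/-- The number `#T_{n,p}` of rooted type I triangulations of the `p`-gon with `n` internal
vertices (with `#T_{0,1} = 0` by convention). -/
noncomputable def Tnp (n p : ℕ) : ℝ :=
  if n = 0 ∧ p = 1 then 0 else
    (4 : ℝ) ^ ((n : ℤ) - 1) * p * Nat.factorial (2 * p) *
        Nat.doubleFactorial (2 * p + 3 * n - 5) /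
      ((Nat.factorial p : ℝ) ^ 2 * Nat.factorial n * Nat.doubleFactorial (2 * p + n - 1))

/-- The constant `C(p) = 3^(p-2)·p·(2p)! / (4·√(2π)·(p!)^2)`. -/
noncomputable def Cfun (p : ℕ) : ℝ :=
  (3 : ℝ) ^ ((p : ℤ) - 2) * p * Nat.factorial (2 * p) /
    (4 * Real.sqrt (2 * Real.pi) * (Nat.factorial p : ℝ) ^ 2)

/-! Split `n` by parity. For `n = 2k + 4` and `n = 2k + 5` the two double factorials in `#T_{n,p}`
have the same parity, so `#T_{n,p}` becomes a ratio of ordinary factorials of arguments linear in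
`k`. Stirling's formula in the form `(ak + b)! ~ √(2πak) (ak)^b (ak/e)^(ak)` then gives the
asymptotics along each parity class: the powers of `k/e` cancel, the geometric factors combine
to `(12√3)^n` and the powers of `k` to `n^(-5/2)`. -/

open Real Nat Topology

theorem Nat.atTop_le_map_two_mul_add_sup (c : ℕ) :
    (atTop : Filter ℕ) ≤
      map (fun k => 2 * k + c) atTop ⊔ map (fun k => 2 * k + c + 1) atTop := by
  rintro s ⟨hs₀, hs₁⟩
  obtain ⟨N₀, hN₀⟩ := mem_atTop_sets.1 hs₀
  obtain ⟨N₁, hN₁⟩ := mem_atTop_sets.1 hs₁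
  refine mem_atTop_sets.2 ⟨2 * (N₀ + N₁) + c, fun n hn => ?_⟩
  obtain ⟨k, hk | hk⟩ := Nat.even_or_odd' (n - c)
  · simpa [show n = 2 * k + c by omega] using hN₀ k (by omega)
  · simpa [show n = 2 * k + c + 1 by omega] using hN₁ k (by omega)

theorem Asymptotics.isEquivalent_of_comp_two_mul_add {β : Type*} [NormedAddCommGroup β]
    {u v : ℕ → β} (c : ℕ)
    (h₀ : (fun k => u (2 * k + c)) ~[atTop] fun k => v (2 * k + c))
    (h₁ : (fun k => u (2 * k + c + 1)) ~[atTop] fun k => v (2 * k + c + 1)) :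
    u ~[atTop] v :=
  (IsLittleO.sup (isEquivalent_map.2 h₀) (isEquivalent_map.2 h₁)).mono
    (Nat.atTop_le_map_two_mul_add_sup c)

theorem isEquivalent_natCast_add (c : ℕ) :
    (fun n : ℕ => ((n + c : ℕ) : ℝ)) ~[atTop] fun n => (n : ℝ) := by
  push_cast
  exact IsEquivalent.refl.add_const_of_norm_tendsto_atTop
    (tendsto_norm_atTop_atTop.comp tendsto_natCast_atTop_atTop)

theorem isEquivalent_natCast_two_mul_add_rpow (c : ℕ) (r : ℝ) :
    (fun k : ℕ => (2 * k : ℝ) ^ r) ~[atTop] fun k => ((2 * k + c : ℕ) : ℝ) ^ r := by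
  have h := (isEquivalent_natCast_add c).comp_tendsto (tendsto_id.const_mul_atTop' two_pos)
  refine (IsEquivalent.rpow (fun _ => Nat.cast_nonneg _) h).symm.congr_left
    (Eventually.of_forall fun k => ?_)
  simp

theorem isEquivalent_factorial_add (b : ℕ) :
    (fun n : ℕ => ((n + b)! : ℝ)) ~[atTop] fun n => (n : ℝ) ^ b * n ! := by
  induction b with
  | zero => simpa using IsEquivalent.refl
  | succ b ih =>
    refine (((isEquivalent_natCast_add (b + 1)).mul ih).congr_left
      (Eventually.of_forall fun n => ?_)).congr_right (Eventually.of_forall fun n => ?_)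
    · simp [← add_assoc, Nat.factorial_succ]
    · simp only [Pi.mul_apply]; ring

theorem isEquivalent_factorial_mul_add (a b : ℕ) (ha : 0 < a) :
    (fun k : ℕ => ((a * k + b)! : ℝ)) ~[atTop] fun k =>
      √(2 * π) * √a * a ^ b * (a ^ k) ^ a * (√k * k ^ b * ((k / exp 1) ^ k) ^ a) := by
  have h := ((isEquivalent_factorial_add b).trans
    (IsEquivalent.refl.mul Stirling.factorial_isEquivalent_stirling)).comp_tendsto
      (tendsto_id.const_mul_atTop' ha)
  refine h.congr_right (Eventually.of_forall fun k => ?_)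
  simp only [Function.comp_apply, Pi.mul_apply, id]
  push_cast
  rw [show 2 * ((a : ℝ) * k) * π = 2 * π * a * k by ring, Real.sqrt_mul' _ (by positivity),
    Real.sqrt_mul' _ (by positivity), mul_div_assoc, mul_pow, mul_pow]
  ring

theorem rpow_neg_five_div_two {x : ℝ} (hx : 0 < x) :
    x ^ (-(5 / 2) : ℝ) = (x ^ 2 * √x)⁻¹ := by
  rw [Real.rpow_neg hx.le, Real.sqrt_eq_rpow, ← Real.rpow_natCast, ← Real.rpow_add hx]
  norm_num

theorem three_zpow_sub_two (p : ℕ) : (3 : ℝ) ^ ((p : ℤ) - 2) = 3 ^ p / 9 := by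
  rw [zpow_sub₀ (by norm_num), zpow_natCast]
  norm_num

-- Over the bases `2` and `3` only: `ring` does not factor numeral bases such as `432 ^ k`.
theorem twelve_mul_sqrt_three_pow_two_mul_add_four (k : ℕ) :
    (12 * √3 : ℝ) ^ (2 * k + 4) = 2 ^ 8 * 3 ^ 6 * (2 ^ k) ^ 4 * (3 ^ k) ^ 3 := by
  calc (12 * √3 : ℝ) ^ (2 * k + 4) = ((12 * √3) ^ 2) ^ (k + 2) := by rw [← pow_mul]; ring_nf
    _ = (2 ^ 4 * 3 ^ 3) ^ (k + 2) := by rw [mul_pow, Real.sq_sqrt (by norm_num)]; norm_num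
    _ = 2 ^ 8 * 3 ^ 6 * (2 ^ k) ^ 4 * (3 ^ k) ^ 3 := by rw [mul_pow, ← pow_mul, ← pow_mul]; ring

theorem twelve_mul_sqrt_three_pow_two_mul_add_five (k : ℕ) :
    (12 * √3 : ℝ) ^ (2 * k + 5) = 2 ^ 10 * 3 ^ 7 * √3 * (2 ^ k) ^ 4 * (3 ^ k) ^ 3 := by
  rw [pow_succ, twelve_mul_sqrt_three_pow_two_mul_add_four]
  ring

theorem doubleFactorial_two_mul_add_one_eq_div (j : ℕ) :
    ((2 * j + 1)‼ : ℝ) = (2 * j + 1)! / (2 ^ j * j !) := by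
  rw [eq_div_iff (by positivity), Nat.factorial_eq_mul_doubleFactorial,
    Nat.doubleFactorial_two_mul]
  push_cast
  ring

theorem Tnp_two_mul_add_four (p k : ℕ) :
    Tnp (2 * k + 4) p = p * (2 * p)! / (p ! : ℝ) ^ 2 * 2 ^ (2 * k + 4) *
      ((6 * k + (2 * p + 7))! * (k + (p + 1))! /
        ((2 * k + 4)! * (3 * k + (p + 3))! * (2 * k + (2 * p + 3))!)) := by
  rw [Tnp, if_neg (by omega),
    show 2 * p + 3 * (2 * k + 4) - 5 = 2 * (3 * k + (p + 3)) + 1 by omega,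
    show 2 * p + (2 * k + 4) - 1 = 2 * (k + (p + 1)) + 1 by omega,
    show ((2 * k + 4 : ℕ) : ℤ) - 1 = (2 * k + 3 : ℕ) by omega, zpow_natCast,
    doubleFactorial_two_mul_add_one_eq_div, doubleFactorial_two_mul_add_one_eq_div,
    show 2 * (3 * k + (p + 3)) + 1 = 6 * k + (2 * p + 7) by ring,
    show 2 * (k + (p + 1)) + 1 = 2 * k + (2 * p + 3) by ring,
    show (4 : ℝ) = 2 ^ 2 by norm_num, ← pow_mul]
  field_simp
  ring

theorem Tnp_two_mul_add_five (p k : ℕ) :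
    Tnp (2 * k + 5) p = p * (2 * p)! / (p ! : ℝ) ^ 2 * 2 ^ (6 * k + 11) *
      ((3 * k + (p + 5))! / ((2 * k + 5)! * (k + (p + 2))!)) := by
  rw [Tnp, if_neg (by omega),
    show 2 * p + 3 * (2 * k + 5) - 5 = 2 * (3 * k + (p + 5)) by omega,
    show 2 * p + (2 * k + 5) - 1 = 2 * (k + (p + 2)) by omega,
    show ((2 * k + 5 : ℕ) : ℤ) - 1 = (2 * k + 4 : ℕ) by omega, zpow_natCast,
    Nat.doubleFactorial_two_mul, Nat.doubleFactorial_two_mul,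
    show (4 : ℝ) = 2 ^ 2 by norm_num, ← pow_mul]
  push_cast
  field_simp
  ring

theorem Tnp_two_mul_add_four_isEquivalent (p : ℕ) :
    (fun k : ℕ => Tnp (2 * k + 4) p) ~[atTop]
      fun k => Cfun p * (12 * √3) ^ (2 * k + 4) *
        ((2 * k + 4 : ℕ) : ℝ) ^ (-(5 / 2) : ℝ) := by
  have F := isEquivalent_factorial_mul_add
  have F₁ : (fun k : ℕ => ((k + (p + 1))! : ℝ)) ~[atTop] _ :=
    (F 1 (p + 1) one_pos).congr_left (Eventually.of_forall fun k => by simp only [one_mul])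
  have hstirling := (IsEquivalent.refl
      (u := fun k : ℕ => p * (2 * p)! / (p ! : ℝ) ^ 2 * 2 ^ (2 * k + 4))).mul
    (((F 6 (2 * p + 7) (by norm_num)).mul F₁).div
      (((F 2 4 two_pos).mul (F 3 (p + 3) (by norm_num))).mul (F 2 (2 * p + 3) two_pos)))
  refine IsEquivalent.trans ?_ (IsEquivalent.refl.mul (isEquivalent_natCast_two_mul_add_rpow 4 _))
  refine (hstirling.congr_left (Eventually.of_forall fun k => (Tnp_two_mul_add_four p k).symm)).congr_right
    ?_
  filter_upwards [eventually_gt_atTop 0] with k hk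
  have hk₀ : (0 : ℝ) < k := by exact_mod_cast hk
  simp only [Pi.mul_apply, Pi.div_apply]
  rw [Cfun, rpow_neg_five_div_two (by positivity), twelve_mul_sqrt_three_pow_two_mul_add_four,
    three_zpow_sub_two, Real.sqrt_mul' _ hk₀.le]
  push_cast
  rw [show (6 : ℝ) = 2 * 3 by norm_num, Real.sqrt_mul' 2 (by norm_num : (0 : ℝ) ≤ 3),
    Real.sqrt_one]
  simp only [mul_pow]
  field_simp
  ring

theorem Tnp_two_mul_add_five_isEquivalent (p : ℕ) :
    (fun k : ℕ => Tnp (2 * k + 5) p) ~[atTop]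
      fun k => Cfun p * (12 * √3) ^ (2 * k + 5) *
        ((2 * k + 5 : ℕ) : ℝ) ^ (-(5 / 2) : ℝ) := by
  have F := isEquivalent_factorial_mul_add
  have F₁ : (fun k : ℕ => ((k + (p + 2))! : ℝ)) ~[atTop] _ :=
    (F 1 (p + 2) one_pos).congr_left (Eventually.of_forall fun k => by simp only [one_mul])
  have hstirling := (IsEquivalent.refl
      (u := fun k : ℕ => p * (2 * p)! / (p ! : ℝ) ^ 2 * 2 ^ (6 * k + 11))).mul
    ((F 3 (p + 5) (by norm_num)).div ((F 2 5 two_pos).mul F₁))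
  refine IsEquivalent.trans ?_ (IsEquivalent.refl.mul (isEquivalent_natCast_two_mul_add_rpow 5 _))
  refine (hstirling.congr_left (Eventually.of_forall fun k => (Tnp_two_mul_add_five p k).symm)).congr_right
    ?_
  filter_upwards [eventually_gt_atTop 0] with k hk
  have hk₀ : (0 : ℝ) < k := by exact_mod_cast hk
  simp only [Pi.mul_apply, Pi.div_apply]
  rw [Cfun, rpow_neg_five_div_two (by positivity), twelve_mul_sqrt_three_pow_two_mul_add_five,
    three_zpow_sub_two, Real.sqrt_mul' _ hk₀.le]
  push_cast
  field_simp
  ring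

theorem Tnp_asymptotic_general (p : ℕ) :
    (fun n : ℕ => Tnp n p) ~[atTop]
      (fun n : ℕ => Cfun p * (12 * Real.sqrt 3) ^ n * (n : ℝ) ^ (-(5 / 2) : ℝ)) :=
  isEquivalent_of_comp_two_mul_add 4 (Tnp_two_mul_add_four_isEquivalent p)
    (Tnp_two_mul_add_five_isEquivalent p)

/-- As `n → ∞`, `#T_{n,p} ~ C(p)·(12√3)^n·n^(-5/2)`. -/
theorem Tnp_asymptotic (p : ℕ) (hp : 1 ≤ p) :
    (fun n : ℕ => Tnp n p) ~[atTop]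
      (fun n : ℕ => Cfun p * (12 * Real.sqrt 3) ^ n * (n : ℝ) ^ (-(5 / 2) : ℝ)) :=
  Tnp_asymptotic_general p
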